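/- If Γ ⇝ Γ', then for every τ : ℕ, Γ ∸ τ ⇝ Γ' ∸ τ. -/
import Mathlib


/-- Temporal typing contexts over a type `Ty` of value types. -/
inductive Ctx (Ty : Type) : Type
  | empty : Ctx Ty
  | var : Ctx Ty → Ty → Ctx Ty
  | mod : Ctx Ty → ℕ → Ctx Ty

namespace Ctx

variable {Ty : Type}

/-- The time captured by a context. -/
def time : Ctx Ty → ℕ
  | empty => 0
  | var Γ _ => time Γ
  | mod Γ τ => time Γ + τ

/-- `X ∈ Γ`: some variable extension by `X` occurs in `Γ`. -/
inductive Mem : Ty → Ctx Ty → Prop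
  | here {Γ : Ctx Ty} {X : Ty} : Mem X (var Γ X)
  | thereVar {Γ : Ctx Ty} {X Y : Ty} : Mem X Γ → Mem X (var Γ Y)
  | thereMod {Γ : Ctx Ty} {X : Ty} {τ : ℕ} : Mem X Γ → Mem X (mod Γ τ)

/-- The "time travelling" operation `Γ ∸ τ`. -/
def minus : Ctx Ty → ℕ → Ctx Ty
  | Γ, 0 => Γ
  | empty, _ + 1 => empty
  | var Γ _, τ + 1 => minus Γ (τ + 1)
  | mod Γ τ', τ + 1 =>
      if τ + 1 ≤ τ' then mod Γ (τ' - (τ + 1)) else minus Γ ((τ + 1) - τ')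

/-- Graded membership `X ∈_τ Γ`: `X` occurs in `Γ` with `τ` worth of modalities to its right. -/
inductive MemG : Ty → ℕ → Ctx Ty → Prop
  | here {Γ : Ctx Ty} {X : Ty} : MemG X 0 (var Γ X)
  | thereVar {Γ : Ctx Ty} {X Y : Ty} {τ : ℕ} : MemG X τ Γ → MemG X τ (var Γ Y)
  | thereMod {Γ : Ctx Ty} {X : Ty} {τ τ' : ℕ} : MemG X τ Γ → MemG X (τ + τ') (mod Γ τ')

/-- Context concatenation `Γ ++ Γ'`. -/
def append : Ctx Ty → Ctx Ty → Ctx Ty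
  | Γ, empty => Γ
  | Γ, var Γ' X => var (append Γ Γ') X
  | Γ, mod Γ' τ => mod (append Γ Γ') τ

end Ctx

/-- The renaming relation `Γ ⇝ Γ'`. -/
inductive Ren {Ty : Type} : Ctx Ty → Ctx Ty → Prop
  | id (Γ : Ctx Ty) : Ren Γ Γ
  | comp {Γ Γ' Γ'' : Ctx Ty} : Ren Γ Γ' → Ren Γ' Γ'' → Ren Γ Γ''
  | wk {Γ : Ctx Ty} (X : Ty) : Ren Γ (Ctx.var Γ X)
  | var {Γ : Ctx Ty} {X : Ty} : Ctx.Mem X Γ → Ren (Ctx.var Γ X) Γ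
  | eta {Γ : Ctx Ty} : Ren (Ctx.mod Γ 0) Γ
  | etaInv {Γ : Ctx Ty} : Ren Γ (Ctx.mod Γ 0)
  | mu {Γ : Ctx Ty} (τ τ' : ℕ) : Ren (Ctx.mod Γ (τ + τ')) (Ctx.mod (Ctx.mod Γ τ) τ')
  | muInv {Γ : Ctx Ty} (τ τ' : ℕ) : Ren (Ctx.mod (Ctx.mod Γ τ) τ') (Ctx.mod Γ (τ + τ'))
  | mon {Γ : Ctx Ty} {τ τ' : ℕ} : τ ≤ τ' → Ren (Ctx.mod Γ τ) (Ctx.mod Γ τ')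
  | congVar {Γ Γ' : Ctx Ty} (X : Ty) : Ren Γ Γ' → Ren (Ctx.var Γ X) (Ctx.var Γ' X)
  | congMod {Γ Γ' : Ctx Ty} (τ : ℕ) : Ren Γ Γ' → Ren (Ctx.mod Γ τ) (Ctx.mod Γ' τ)


lemma minus_zero {Ty : Type} (Γ : Ctx Ty) : Ctx.minus Γ 0 = Γ := by
  cases Γ <;> rfl

lemma minus_mod {Ty : Type} (Γ : Ctx Ty) (τ' σ : ℕ) :
    Ctx.minus (Ctx.mod Γ τ') σ =
      if σ ≤ τ' then Ctx.mod Γ (τ' - σ) else Ctx.minus Γ (σ - τ') := by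
  cases σ with
  | zero => simp [minus_zero]
  | succ s => rfl

lemma minus_empty {Ty : Type} (σ : ℕ) : Ctx.minus (Ctx.empty : Ctx Ty) σ = Ctx.empty := by
  cases σ <;> rfl

lemma minus_var {Ty : Type} (Γ : Ctx Ty) (X : Ty) (σ : ℕ) (h : 0 < σ) :
    Ctx.minus (Ctx.var Γ X) σ = Ctx.minus Γ σ := by
  cases σ with
  | zero => omega
  | succ s => rfl

lemma minus_antitone {Ty : Type} (Γ : Ctx Ty) :
    ∀ {k k' : ℕ}, k' ≤ k → Ren (Ctx.minus Γ k) (Ctx.minus Γ k') := by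
  induction Γ with
  | empty => intro k k' _; rw [minus_empty, minus_empty]; exact Ren.id _
  | var Γ X ih =>
    intro k k' hk
    cases k' with
    | zero =>
      cases k with
      | zero => exact Ren.id _
      | succ s =>
        rw [minus_var Γ X (s+1) (by omega), minus_zero]
        have h1 : Ren (Ctx.minus Γ (s+1)) Γ := by
          have := ih (k := s+1) (k' := 0) (Nat.zero_le _)
          rwa [minus_zero] at this
        exact Ren.comp h1 (Ren.wk X)
    | succ s' =>
      rw [minus_var Γ X _ (by omega), minus_var Γ X _ (by omega)]
      exact ih hk
  | mod Γ τ ih =>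
    intro k k' hk
    rw [minus_mod, minus_mod]
    split_ifs with h1 h2 h2
    · exact Ren.mon (by omega)
    · omega
    · have h3 : Ren (Ctx.minus Γ (k - τ)) Γ := by
        have := ih (k := k - τ) (k' := 0) (Nat.zero_le _)
        rwa [minus_zero] at this
      exact Ren.comp h3 (Ren.comp Ren.etaInv (Ren.mon (Nat.zero_le _)))
    · exact ih (by omega)

lemma minus_ren {Ty : Type} (Γ : Ctx Ty) (k : ℕ) : Ren (Ctx.minus Γ k) Γ := by
  have := minus_antitone Γ (k := k) (k' := 0) (Nat.zero_le _)
  rwa [minus_zero] at this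

theorem ren_minus {Ty : Type} {Γ Γ' : Ctx Ty} (h : Ren Γ Γ') (τ : ℕ) :
    Ren (Ctx.minus Γ τ) (Ctx.minus Γ' τ) := by
  induction h generalizing τ with
  | id Γ => exact Ren.id _
  | comp _ _ ih1 ih2 => exact Ren.comp (ih1 τ) (ih2 τ)
  | wk X =>
    cases τ with
    | zero => rw [minus_zero, minus_zero]; exact Ren.wk X
    | succ s => rw [minus_var _ X _ (by omega)]; exact Ren.id _
  | var hm =>
    cases τ with
    | zero => rw [minus_zero, minus_zero]; exact Ren.var hm
    | succ s => rw [minus_var _ _ _ (by omega)]; exact Ren.id _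
  | eta =>
    rw [minus_mod]
    split_ifs with h1
    · have : τ = 0 := by omega
      subst this
      rw [minus_zero]; exact Ren.eta
    · rw [Nat.sub_zero]; exact Ren.id _
  | etaInv =>
    rw [minus_mod]
    split_ifs with h1
    · have : τ = 0 := by omega
      subst this
      rw [minus_zero]; exact Ren.etaInv
    · rw [Nat.sub_zero]; exact Ren.id _
  | mu τ₁ τ₂ =>
    rename_i Γ₀
    simp only [minus_mod]
    split_ifs with h1 h2 h3 h2 h3
    · rw [show τ₁ + τ₂ - τ = τ₁ + (τ₂ - τ) from by omega]
      exact Ren.mu _ _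
    · rw [show τ₁ + τ₂ - τ = τ₁ - (τ - τ₂) from by omega]
      exact Ren.id _
    · omega
    · omega
    · omega
    · rw [show τ - (τ₁ + τ₂) = τ - τ₂ - τ₁ from by omega]
      exact Ren.id _
  | muInv τ₁ τ₂ =>
    rename_i Γ₀
    simp only [minus_mod]
    split_ifs with h1 h2 h2 h3 h3
    · rw [show τ₁ + τ₂ - τ = τ₁ + (τ₂ - τ) from by omega]
      exact Ren.muInv _ _
    · omega
    · rw [show τ₁ + τ₂ - τ = τ₁ - (τ - τ₂) from by omega]
      exact Ren.id _
    · omega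
    · omega
    · rw [show τ - (τ₁ + τ₂) = τ - τ₂ - τ₁ from by omega]
      exact Ren.id _
  | mon hle =>
    rename_i Γ₀ τ₁ τ₂
    rw [minus_mod, minus_mod]
    split_ifs with h1 h2 h2
    · exact Ren.mon (by omega)
    · omega
    · exact Ren.comp (minus_ren _ _) (Ren.comp Ren.etaInv (Ren.mon (Nat.zero_le _)))
    · exact minus_antitone _ (by omega)
  | congVar X _ ih =>
    cases τ with
    | zero =>
      rw [minus_zero, minus_zero]
      have := ih 0
      rw [minus_zero, minus_zero] at this
      exact Ren.congVar X this
    | succ s =>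
      rw [minus_var _ X _ (by omega), minus_var _ X _ (by omega)]
      exact ih _
  | congMod τ' _ ih =>
    rw [minus_mod, minus_mod]
    split_ifs with h1
    · have := ih 0
      rw [minus_zero, minus_zero] at this
      exact Ren.congMod _ this
    · exact ih _
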